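/- arXiv:2508.13596 — 4 statements merged into one kernel-verified Lean document; each statement's English description precedes it below -/
import Mathlib

section
/- At the common center, the Gaussian density strictly exceeds the Student t density: g(μ) > h(μ); equivalently, (2πσ²)^{−1/2} > Γ((ρ+1)/2)/(Γ(ρ/2)·√(ρπ)·s). -/
open Real

noncomputable section

/-- Density of the Gaussian distribution `N(μ, σ²)`. -/
def gaussDensity (μ σ : ℝ) (x : ℝ) : ℝ :=
  (Real.sqrt (2 * Real.pi * σ ^ 2))⁻¹ * Real.exp (-(x - μ) ^ 2 / (2 * σ ^ 2))

/-- Density of the Student t-distribution with `ρ` degrees of freedom,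
location `μ` and scale `s`. -/
def studentTDensity (μ ρ s : ℝ) (x : ℝ) : ℝ :=
  Real.Gamma ((ρ + 1) / 2) / (Real.Gamma (ρ / 2) * Real.sqrt (ρ * Real.pi) * s) *
    (1 + (x - μ) ^ 2 / (ρ * s ^ 2)) ^ (-(ρ + 1) / 2 : ℝ)

lemma gamma_add_half_le (x : ℝ) (hx : 0 < x) :
    Real.Gamma (x + 1/2) ≤ Real.sqrt x * Real.Gamma x := by
  have hx1 : (0:ℝ) < x + 1 := by linarith
  have key := convexOn_log_Gamma.2 (Set.mem_Ioi.mpr hx) (Set.mem_Ioi.mpr hx1)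
    (by norm_num : (0:ℝ) ≤ 1/2) (by norm_num : (0:ℝ) ≤ 1/2) (by norm_num)
  simp only [Function.comp_apply, smul_eq_mul] at key
  have hmid : (1/2 : ℝ) * x + 1/2 * (x+1) = x + 1/2 := by ring
  rw [hmid] at key
  have hΓ : Real.Gamma (x+1) = x * Real.Gamma x := Real.Gamma_add_one hx.ne'
  have hΓpos := Real.Gamma_pos_of_pos hx
  have hΓpos2 := Real.Gamma_pos_of_pos (by linarith : (0:ℝ) < x + 1/2)
  rw [hΓ, Real.log_mul hx.ne' hΓpos.ne'] at key
  have hr : Real.log (Real.sqrt x * Real.Gamma x) =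
      1/2 * Real.log (Real.Gamma x) + 1/2 * (Real.log x + Real.log (Real.Gamma x)) := by
    rw [Real.log_mul (Real.sqrt_pos.mpr hx).ne' hΓpos.ne', Real.log_sqrt hx.le]; ring
  have := Real.log_le_log_iff hΓpos2 (show (0:ℝ) < Real.sqrt x * Real.Gamma x by positivity)
  rw [← this, hr]; exact key

/-- At the common center, the Gaussian density strictly exceeds the Student t density
(for the paper's scale choice `s = σ√(ρ/(ρ−2))`); equivalently,
`(2πσ²)^{−1/2} > Γ((ρ+1)/2)/(Γ(ρ/2)·√(ρπ)·s)`. -/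
theorem gauss_gt_studentT_at_center (μ σ ρ : ℝ) (hσ : 0 < σ) (hρ : 2 < ρ) :
    gaussDensity μ σ μ > studentTDensity μ ρ (σ * Real.sqrt (ρ / (ρ - 2))) μ ∧
    (Real.sqrt (2 * Real.pi * σ ^ 2))⁻¹ >
      Real.Gamma ((ρ + 1) / 2) /
        (Real.Gamma (ρ / 2) * Real.sqrt (ρ * Real.pi) * (σ * Real.sqrt (ρ / (ρ - 2)))) := by
  have hρ0 : (0:ℝ) < ρ := by linarith
  have hρ2 : (0:ℝ) < ρ - 2 := by linarith
  have hπ := Real.pi_pos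
  have hB := Real.Gamma_pos_of_pos (by positivity : (0:ℝ) < ρ/2)
  have hA := Real.Gamma_pos_of_pos (by positivity : (0:ℝ) < (ρ+1)/2)
  have hs : (0:ℝ) < Real.sqrt (ρ / (ρ - 2)) := Real.sqrt_pos.mpr (by positivity)
  have hD : (0:ℝ) < Real.Gamma (ρ / 2) * Real.sqrt (ρ * Real.pi) *
      (σ * Real.sqrt (ρ / (ρ - 2))) := by positivity
  have hsq : (0:ℝ) < Real.sqrt (2 * Real.pi * σ ^ 2) :=
    Real.sqrt_pos.mpr (by positivity)
  -- Gamma ratio bound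
  have hgam : Real.Gamma ((ρ+1)/2) ≤ Real.sqrt (ρ/2) * Real.Gamma (ρ/2) := by
    have := gamma_add_half_le (ρ/2) (by positivity)
    have e : ρ/2 + 1/2 = (ρ+1)/2 := by ring
    rwa [e] at this
  -- sqrt comparison
  have ha : Real.sqrt (ρ/2) * Real.sqrt (2 * Real.pi * σ ^ 2)
      = Real.sqrt ((ρ/2) * (2 * Real.pi * σ ^ 2)) :=
    (Real.sqrt_mul (by positivity) _).symm
  have hb : Real.sqrt (ρ * Real.pi) * (σ * Real.sqrt (ρ / (ρ - 2)))
      = Real.sqrt ((ρ * Real.pi) * (σ ^ 2 * (ρ / (ρ - 2)))) := by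
    rw [Real.sqrt_mul (by positivity : (0:ℝ) ≤ ρ * Real.pi) (σ ^ 2 * (ρ / (ρ - 2))),
      Real.sqrt_mul (by positivity : (0:ℝ) ≤ σ^2), Real.sqrt_sq hσ.le]
  have hlt : Real.sqrt (ρ/2) * Real.sqrt (2 * Real.pi * σ ^ 2)
      < Real.sqrt (ρ * Real.pi) * (σ * Real.sqrt (ρ / (ρ - 2))) := by
    rw [ha, hb]
    apply Real.sqrt_lt_sqrt (by positivity)
    have h1 : (1:ℝ) < ρ / (ρ - 2) := (one_lt_div hρ2).mpr (by linarith)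
    have : (ρ/2) * (2 * Real.pi * σ ^ 2) = ρ * Real.pi * (σ ^ 2 * 1) := by ring
    rw [this]
    have := mul_lt_mul_of_pos_left h1 (show (0:ℝ) < σ^2 by positivity)
    exact mul_lt_mul_of_pos_left this (by positivity)
  -- key inequality
  have key : Real.Gamma ((ρ+1)/2) * Real.sqrt (2 * Real.pi * σ ^ 2) <
      Real.Gamma (ρ / 2) * Real.sqrt (ρ * Real.pi) * (σ * Real.sqrt (ρ / (ρ - 2))) := by
    calc Real.Gamma ((ρ+1)/2) * Real.sqrt (2 * Real.pi * σ ^ 2)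
        ≤ (Real.sqrt (ρ/2) * Real.Gamma (ρ/2)) * Real.sqrt (2 * Real.pi * σ ^ 2) := by
          exact mul_le_mul_of_nonneg_right hgam hsq.le
      _ = Real.Gamma (ρ/2) * (Real.sqrt (ρ/2) * Real.sqrt (2 * Real.pi * σ ^ 2)) := by ring
      _ < Real.Gamma (ρ/2) * (Real.sqrt (ρ * Real.pi) * (σ * Real.sqrt (ρ / (ρ - 2)))) :=
          mul_lt_mul_of_pos_left hlt hB
      _ = Real.Gamma (ρ / 2) * Real.sqrt (ρ * Real.pi) * (σ * Real.sqrt (ρ / (ρ - 2))) := by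
          ring
  have h2 : Real.Gamma ((ρ + 1) / 2) /
      (Real.Gamma (ρ / 2) * Real.sqrt (ρ * Real.pi) * (σ * Real.sqrt (ρ / (ρ - 2)))) <
      (Real.sqrt (2 * Real.pi * σ ^ 2))⁻¹ := by
    rw [← one_div, div_lt_div_iff₀ hD hsq, one_mul]
    exact key
  refine ⟨?_, h2⟩
  have e1 : gaussDensity μ σ μ = (Real.sqrt (2 * Real.pi * σ ^ 2))⁻¹ := by
    simp [gaussDensity]
  have e2 : studentTDensity μ ρ (σ * Real.sqrt (ρ / (ρ - 2))) μ =
      Real.Gamma ((ρ + 1) / 2) /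
      (Real.Gamma (ρ / 2) * Real.sqrt (ρ * Real.pi) * (σ * Real.sqrt (ρ / (ρ - 2)))) := by
    simp [studentTDensity]
  rw [e1, e2]; exact h2
end
end

section
/- The density ratio is strictly radially decreasing: the function u ↦ g(x)/h(x), viewed as a function of u = (x − μ)², is strictly decreasing on [0, ∞); in particular, for any x₁, x₂ ∈ ℝ with |x₁ − μ| < |x₂ − μ|, one has g(x₁)/h(x₁) > g(x₂)/h(x₂). -/
open Real Set

noncomputable section

lemma core_aux (a b p : ℝ) (ha : 0 < a) (hb : 0 < b) (hp : 0 < p)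
    (hab : p * b ≤ a) {u v : ℝ} (hu : 0 ≤ u) (huv : u < v) :
    Real.exp (-v / b) * (1 + v / a) ^ (p : ℝ) <
      Real.exp (-u / b) * (1 + u / a) ^ (p : ℝ) := by
  set t := (v - u) / (a + u) with ht_def
  have hau : 0 < a + u := by linarith
  have ht : 0 < t := div_pos (by linarith) hau
  have h1u : (0:ℝ) < 1 + u / a := by positivity
  have h1 : 1 + v / a = (1 + u / a) * (1 + t) := by
    rw [ht_def]; field_simp; ring
  have hsplit : (1 + v / a) ^ (p:ℝ) = (1 + u / a) ^ (p:ℝ) * (1 + t) ^ (p:ℝ) := by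
    rw [h1, Real.mul_rpow h1u.le (by linarith)]
  have step1 : (1 + t) ^ (p:ℝ) < Real.exp (t * p) := by
    have h2 : (1 + t) < Real.exp t := by
      have := Real.add_one_lt_exp (x := t) ht.ne'
      linarith
    calc (1 + t) ^ (p:ℝ) < (Real.exp t) ^ (p:ℝ) :=
          Real.rpow_lt_rpow (by linarith) h2 hp
      _ = Real.exp (t * p) := by
          rw [Real.rpow_def_of_pos (Real.exp_pos t), Real.log_exp]
  have step2 : t * p ≤ (v - u) / b := by
    rw [ht_def, div_mul_eq_mul_div, div_le_div_iff₀ hau hb]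
    nlinarith
  have h2 : (1 + t) ^ (p:ℝ) < Real.exp ((v - u) / b) :=
    step1.trans_le (Real.exp_le_exp.mpr step2)
  have hpos : 0 < Real.exp (-v / b) * (1 + u / a) ^ (p:ℝ) := by positivity
  calc Real.exp (-v / b) * (1 + v / a) ^ (p:ℝ)
      = Real.exp (-v / b) * (1 + u / a) ^ (p:ℝ) * (1 + t) ^ (p:ℝ) := by
        rw [hsplit]; ring
    _ < Real.exp (-v / b) * (1 + u / a) ^ (p:ℝ) * Real.exp ((v - u) / b) :=
        (mul_lt_mul_of_pos_left h2 hpos)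
    _ = (Real.exp (-v / b) * Real.exp ((v - u) / b)) * (1 + u / a) ^ (p:ℝ) := by ring
    _ = Real.exp (-u / b) * (1 + u / a) ^ (p:ℝ) := by
        rw [← Real.exp_add]; congr 1; ring

/-- The radial profile of the Gaussian density, as a function of `u = (x − μ)²`. -/
def gaussRad (σ : ℝ) (u : ℝ) : ℝ :=
  (Real.sqrt (2 * Real.pi * σ ^ 2))⁻¹ * Real.exp (-u / (2 * σ ^ 2))

/-- The radial profile of the Student t density, as a function of `u = (x − μ)²`. -/
def studentTRad (ρ s : ℝ) (u : ℝ) : ℝ :=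
  Real.Gamma ((ρ + 1) / 2) / (Real.Gamma (ρ / 2) * Real.sqrt (ρ * Real.pi) * s) *
    (1 + u / (ρ * s ^ 2)) ^ (-(ρ + 1) / 2 : ℝ)

/-- The density ratio `g/h` is strictly radially decreasing: as a function of
`u = (x − μ)²` it is strictly decreasing on `[0, ∞)`; in particular, for any
`x₁, x₂` with `|x₁ − μ| < |x₂ − μ|`, one has `g(x₁)/h(x₁) > g(x₂)/h(x₂)`. -/
theorem gauss_div_studentT_radially_strictAnti (μ σ ρ : ℝ) (hσ : 0 < σ) (hρ : 2 < ρ) :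
    (∀ x, gaussDensity μ σ x = gaussRad σ ((x - μ) ^ 2)) ∧
    (∀ x, studentTDensity μ ρ (σ * Real.sqrt (ρ / (ρ - 2))) x =
        studentTRad ρ (σ * Real.sqrt (ρ / (ρ - 2))) ((x - μ) ^ 2)) ∧
    StrictAntiOn
      (fun u => gaussRad σ u / studentTRad ρ (σ * Real.sqrt (ρ / (ρ - 2))) u)
      (Set.Ici 0) ∧
    (∀ x₁ x₂ : ℝ, |x₁ - μ| < |x₂ - μ| →
      gaussDensity μ σ x₁ / studentTDensity μ ρ (σ * Real.sqrt (ρ / (ρ - 2))) x₁ >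
      gaussDensity μ σ x₂ / studentTDensity μ ρ (σ * Real.sqrt (ρ / (ρ - 2))) x₂) := by
  have hρ0 : (0:ℝ) < ρ := by linarith
  have hρ2 : (0:ℝ) < ρ - 2 := by linarith
  set s := σ * Real.sqrt (ρ / (ρ - 2)) with hs_def
  have hs : 0 < s := mul_pos hσ (Real.sqrt_pos.mpr (div_pos hρ0 hρ2))
  have hs2 : s ^ 2 = σ ^ 2 * (ρ / (ρ - 2)) := by
    rw [hs_def, mul_pow, Real.sq_sqrt (le_of_lt (div_pos hρ0 hρ2))]
  -- abbreviations
  set a := ρ * s ^ 2 with ha_def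
  set b := 2 * σ ^ 2 with hb_def
  set p := (ρ + 1) / 2 with hp_def
  have ha : 0 < a := by positivity
  have hb : 0 < b := by positivity
  have hp : 0 < p := by rw [hp_def]; linarith
  have hab : p * b ≤ a := by
    have h1 : a * (ρ - 2) = σ ^ 2 * ρ ^ 2 := by
      rw [ha_def, hs2]; field_simp
    have h2 : p * b * (ρ - 2) ≤ a * (ρ - 2) := by
      rw [h1, hp_def, hb_def]
      nlinarith [mul_nonneg (sq_nonneg σ) (show (0:ℝ) ≤ ρ + 2 by linarith)]
    exact le_of_mul_le_mul_right h2 hρ2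
  -- constants
  have hCg : 0 < (Real.sqrt (2 * Real.pi * σ ^ 2))⁻¹ := by
    have : 0 < 2 * Real.pi * σ ^ 2 := by positivity
    positivity
  have hCt : 0 < Real.Gamma ((ρ + 1) / 2) / (Real.Gamma (ρ / 2) * Real.sqrt (ρ * Real.pi) * s) := by
    have h1 : 0 < Real.Gamma ((ρ + 1) / 2) := Real.Gamma_pos_of_pos (by linarith)
    have h2 : 0 < Real.Gamma (ρ / 2) := Real.Gamma_pos_of_pos (by linarith)
    have h3 : 0 < Real.sqrt (ρ * Real.pi) := Real.sqrt_pos.mpr (by positivity)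
    positivity
  -- ratio formula
  have hratio : ∀ u : ℝ, 0 ≤ u →
      gaussRad σ u / studentTRad ρ s u =
        ((Real.sqrt (2 * Real.pi * σ ^ 2))⁻¹ /
          (Real.Gamma ((ρ + 1) / 2) / (Real.Gamma (ρ / 2) * Real.sqrt (ρ * Real.pi) * s))) *
          (Real.exp (-u / b) * (1 + u / a) ^ (p : ℝ)) := by
    intro u hu
    have h1u : (0:ℝ) < 1 + u / a := by positivity
    have hneg : (1 + u / a) ^ (-(ρ + 1) / 2 : ℝ) = ((1 + u / a) ^ (p : ℝ))⁻¹ := by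
      rw [hp_def, neg_div, Real.rpow_neg h1u.le]
    rw [gaussRad, studentTRad, ← ha_def, ← hb_def, hneg]
    have hpow : (0:ℝ) < (1 + u / a) ^ (p : ℝ) := Real.rpow_pos_of_pos h1u _
    field_simp
  have hanti : StrictAntiOn
      (fun u => gaussRad σ u / studentTRad ρ s u) (Set.Ici 0) := by
    intro u hu v hv huv
    simp only
    rw [hratio u hu, hratio v (le_trans hu huv.le)]
    have hK : 0 < (Real.sqrt (2 * Real.pi * σ ^ 2))⁻¹ /
        (Real.Gamma ((ρ + 1) / 2) / (Real.Gamma (ρ / 2) * Real.sqrt (ρ * Real.pi) * s)) :=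
      div_pos hCg hCt
    exact mul_lt_mul_of_pos_left (core_aux a b p ha hb hp hab hu huv) hK
  refine ⟨fun x => rfl, fun x => rfl, hanti, ?_⟩
  intro x₁ x₂ hx
  have h1 : (x₁ - μ) ^ 2 < (x₂ - μ) ^ 2 := by
    rw [← sq_abs (x₁ - μ), ← sq_abs (x₂ - μ)]
    exact pow_lt_pow_left₀ hx (abs_nonneg _) (by norm_num)
  have := hanti (Set.mem_Ici.mpr (sq_nonneg (x₁ - μ))) (Set.mem_Ici.mpr (sq_nonneg (x₂ - μ))) h1
  simpa [gaussDensity, studentTDensity, gaussRad, studentTRad] using this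
end
end

section
/- There exists a unique crossing radius r > 0 such that g(μ + r) = h(μ + r); moreover, g(x) > h(x) for all x with |x − μ| < r (the Gaussian has higher density than the t-distribution near the mean) and g(x) < h(x) for all x with |x − μ| > r (the Gaussian has lower density than the t-distribution in the tails). -/
open Real

noncomputable section

/-!
With `t = (x - μ)²` and `k = ρ s²`,
`log (g x / h x) = log (g μ / h μ) - t / (2σ²) + (ρ + 1) / 2 · log (1 + t / k)`.
Since `log (1 + u) ≤ u`, this decreases in `t` at rate at least `1 / (2σ²) - (ρ + 1) / (2k)`,
which is positive for the paper's scale because `(ρ + 1)(ρ - 2) < ρ²`; so it is strictly decreasing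
and tends to `-∞`. It is positive at `t = 0`: log-convexity of `Γ` gives
`Γ ((ρ + 1) / 2) ≤ Γ (ρ / 2) √(ρ / 2)`, so the peak of `h` is at most the peak `1 / (√(2π) s)` of
`N(μ, s²)`, which is below the peak of `g` as `σ < s`. The intermediate value theorem then
provides the unique crossing.
-/

open Set Filter

theorem Real.Gamma_add_half_le_mul_sqrt {a : ℝ} (ha : 0 < a) :
    Gamma (a + 1 / 2) ≤ Gamma a * √a := by
  have hΓ : 0 ≤ Gamma a := (Gamma_pos_of_pos ha).le
  calc Gamma (a + 1 / 2) = Gamma (1 / 2 * a + 1 / 2 * (a + 1)) := by ring_nf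
    _ ≤ Gamma a ^ (1 / 2 : ℝ) * Gamma (a + 1) ^ (1 / 2 : ℝ) :=
      Gamma_mul_add_mul_le_rpow_Gamma_mul_rpow_Gamma ha (by linarith) (by norm_num)
        (by norm_num) (by norm_num)
    _ = √(Gamma a ^ 2 * a) := by
      rw [Gamma_add_one ha.ne', ← mul_rpow hΓ (by positivity), ← sqrt_eq_rpow]
      ring_nf
    _ = Gamma a * √a := by rw [sqrt_mul (by positivity), sqrt_sq hΓ]

section Densities

variable {μ σ ρ s : ℝ}

theorem gaussDensity_pos (hσ : σ ≠ 0) (x : ℝ) : 0 < gaussDensity μ σ x := by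
  unfold gaussDensity; positivity

theorem studentTDensity_pos (hρ : 0 < ρ) (hs : 0 < s) (x : ℝ) :
    0 < studentTDensity μ ρ s x := by
  unfold studentTDensity
  have : 0 < Gamma ((ρ + 1) / 2) := Gamma_pos_of_pos (by linarith)
  have : 0 < Gamma (ρ / 2) := Gamma_pos_of_pos (by linarith)
  positivity

theorem gaussDensity_self : gaussDensity μ σ μ = (√(2 * π * σ ^ 2))⁻¹ := by
  simp [gaussDensity]

theorem gaussDensity_self_lt_of_lt {τ : ℝ} (hσ : 0 < σ) (hστ : σ < τ) :
    gaussDensity μ τ μ < gaussDensity μ σ μ := by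
  rw [gaussDensity_self, gaussDensity_self]
  gcongr

theorem studentTDensity_self_le_gaussDensity_self (hρ : 0 < ρ) (hs : 0 < s) :
    studentTDensity μ ρ s μ ≤ gaussDensity μ s μ := by
  have hΓ := Gamma_add_half_le_mul_sqrt (half_pos hρ)
  rw [show ρ / 2 + 1 / 2 = (ρ + 1) / 2 by ring] at hΓ
  have hΓ0 : 0 < Gamma (ρ / 2) := Gamma_pos_of_pos (half_pos hρ)
  have hsqrt : √(ρ / 2) / (√(ρ * π) * s) = (√(2 * π * s ^ 2))⁻¹ := by
    rw [sqrt_mul' _ (sq_nonneg s), sqrt_sq hs.le, sqrt_div' _ zero_le_two,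
      sqrt_mul hρ.le, sqrt_mul zero_le_two]
    field_simp
  simp only [studentTDensity, gaussDensity_self, sub_self, zero_pow two_ne_zero, zero_div,
    add_zero, one_rpow, mul_one]
  calc Gamma ((ρ + 1) / 2) / (Gamma (ρ / 2) * √(ρ * π) * s)
      ≤ Gamma (ρ / 2) * √(ρ / 2) / (Gamma (ρ / 2) * √(ρ * π) * s) := by gcongr
    _ = (√(2 * π * s ^ 2))⁻¹ := by rw [← hsqrt]; field_simp

end Densities

theorem Real.log_one_add_sub_log_one_add_le {u v : ℝ} (hu : 0 ≤ u) (huv : u ≤ v) :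
    log (1 + v) - log (1 + u) ≤ v - u := by
  have hu1 : 0 < 1 + u := by linarith
  have hv1 : 0 < 1 + v := by linarith
  rw [← log_div hv1.ne' hu1.ne']
  calc log ((1 + v) / (1 + u)) ≤ (1 + v) / (1 + u) - 1 := log_le_sub_one_of_pos (by positivity)
    _ = (v - u) / (1 + u) := by field_simp; ring
    _ ≤ v - u := div_le_self (by linarith) (by linarith)

def gaussStudentTLogRatio (σ ρ s r : ℝ) : ℝ :=
  log (gaussDensity 0 σ 0 / studentTDensity 0 ρ s 0) - r ^ 2 / (2 * σ ^ 2) +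
    (ρ + 1) / 2 * log (1 + r ^ 2 / (ρ * s ^ 2))

section LogRatio

variable {σ ρ s : ℝ}

theorem gaussDensity_eq_studentTDensity_mul_exp (hσ : σ ≠ 0) (hρ : 0 < ρ) (hs : 0 < s)
    (μ x : ℝ) : gaussDensity μ σ x =
      studentTDensity μ ρ s x * exp (gaussStudentTLogRatio σ ρ s |x - μ|) := by
  have hbase : 0 < 1 + (x - μ) ^ 2 / (ρ * s ^ 2) := by
    have : 0 ≤ (x - μ) ^ 2 / (ρ * s ^ 2) := by positivity
    linarith
  have hh0 := studentTDensity_pos (μ := 0) hρ hs 0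
  rw [gaussStudentTLogRatio, sq_abs, exp_add, exp_sub,
    exp_log (div_pos (gaussDensity_pos hσ 0) hh0), mul_comm ((ρ + 1) / 2),
    ← rpow_def_of_pos hbase]
  simp only [gaussDensity, studentTDensity, sub_zero, zero_pow two_ne_zero, zero_div, add_zero,
    one_rpow, mul_one, neg_div, exp_neg, exp_zero, inv_one, rpow_neg hbase.le]
  have : 0 < Gamma ((ρ + 1) / 2) := Gamma_pos_of_pos (by linarith)
  have : 0 < Gamma (ρ / 2) := Gamma_pos_of_pos (by linarith)
  have : 0 < (1 + (x - μ) ^ 2 / (ρ * s ^ 2)) ^ ((ρ + 1) / 2) := by positivity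
  field_simp

theorem gaussStudentTLogRatio_sub_le (hρ : 0 < ρ) (hs : 0 < s) {a b : ℝ} (ha : 0 ≤ a)
    (hab : a ≤ b) :
    gaussStudentTLogRatio σ ρ s b - gaussStudentTLogRatio σ ρ s a ≤
      -((1 / (2 * σ ^ 2) - (ρ + 1) / (2 * (ρ * s ^ 2))) * (b ^ 2 - a ^ 2)) := by
  have hlog := log_one_add_sub_log_one_add_le (u := a ^ 2 / (ρ * s ^ 2))
    (v := b ^ 2 / (ρ * s ^ 2)) (by positivity) (by gcongr)
  have := mul_le_mul_of_nonneg_left hlog (by linarith : 0 ≤ (ρ + 1) / 2)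
  have e : (ρ + 1) / 2 * (b ^ 2 / (ρ * s ^ 2) - a ^ 2 / (ρ * s ^ 2)) =
      (ρ + 1) / (2 * (ρ * s ^ 2)) * (b ^ 2 - a ^ 2) := by field_simp
  simp only [gaussStudentTLogRatio]
  linear_combination this + e

theorem add_one_div_lt_one_div_of_mul_sq_lt (hσ : σ ≠ 0) (hρ : 0 < ρ) (hs : 0 < s)
    (hk : (ρ + 1) * σ ^ 2 < ρ * s ^ 2) : (ρ + 1) / (2 * (ρ * s ^ 2)) < 1 / (2 * σ ^ 2) := by
  rw [div_lt_div_iff₀ (by positivity) (by positivity)]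
  linarith

theorem strictAntiOn_gaussStudentTLogRatio (hσ : σ ≠ 0) (hρ : 0 < ρ) (hs : 0 < s)
    (hk : (ρ + 1) * σ ^ 2 < ρ * s ^ 2) :
    StrictAntiOn (gaussStudentTLogRatio σ ρ s) (Ici 0) := by
  intro a ha b _ hab
  have hsq : a ^ 2 < b ^ 2 := by gcongr
  have hε := sub_pos.2 (add_one_div_lt_one_div_of_mul_sq_lt hσ hρ hs hk)
  have := gaussStudentTLogRatio_sub_le (σ := σ) hρ hs ha hab.le
  linarith [mul_pos hε (sub_pos.2 hsq)]

theorem tendsto_gaussStudentTLogRatio_atTop (hσ : σ ≠ 0) (hρ : 0 < ρ) (hs : 0 < s)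
    (hk : (ρ + 1) * σ ^ 2 < ρ * s ^ 2) :
    Tendsto (gaussStudentTLogRatio σ ρ s) atTop atBot := by
  set ε := 1 / (2 * σ ^ 2) - (ρ + 1) / (2 * (ρ * s ^ 2))
  have hε : 0 < ε := sub_pos.2 (add_one_div_lt_one_div_of_mul_sq_lt hσ hρ hs hk)
  have hbound : ∀ r, 0 ≤ r → gaussStudentTLogRatio σ ρ s r ≤
      gaussStudentTLogRatio σ ρ s 0 - ε * r ^ 2 := fun r hr => by
    have := gaussStudentTLogRatio_sub_le (σ := σ) hρ hs le_rfl hr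
    simp only [zero_pow two_ne_zero, sub_zero] at this
    linarith
  refine tendsto_atBot_mono' atTop (eventually_atTop.2 ⟨0, hbound⟩) ?_
  have : Tendsto (fun r : ℝ => ε * r ^ 2) atTop atTop :=
    (tendsto_pow_atTop two_ne_zero).const_mul_atTop hε
  simpa only [sub_eq_add_neg, Function.comp_def] using
    tendsto_atBot_add_const_left _ _ (tendsto_neg_atTop_atBot.comp this)

theorem continuous_gaussStudentTLogRatio (hρ : 0 < ρ) (hs : 0 < s) :
    Continuous (gaussStudentTLogRatio σ ρ s) := by
  unfold gaussStudentTLogRatio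
  refine Continuous.add (by fun_prop)
    (continuous_const.mul (Continuous.log (by fun_prop) fun r => ?_))
  have : 0 ≤ r ^ 2 / (ρ * s ^ 2) := by positivity
  linarith

theorem gaussStudentTLogRatio_zero_pos (hσ : 0 < σ) (hρ : 0 < ρ) (hσs : σ < s) :
    0 < gaussStudentTLogRatio σ ρ s 0 := by
  have hs := hσ.trans hσs
  have hlt := (studentTDensity_self_le_gaussDensity_self (μ := 0) hρ hs).trans_lt
    (gaussDensity_self_lt_of_lt hσ hσs)
  simpa [gaussStudentTLogRatio] using
    log_pos ((one_lt_div (studentTDensity_pos hρ hs 0)).2 hlt)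

theorem exists_pos_gaussStudentTLogRatio_eq_zero (hσ : 0 < σ) (hρ : 0 < ρ) (hs : 0 < s)
    (hk : (ρ + 1) * σ ^ 2 < ρ * s ^ 2) :
    ∃ r, 0 < r ∧ gaussStudentTLogRatio σ ρ s r = 0 := by
  have hσs : σ < s := (pow_lt_pow_iff_left₀ hσ.le hs.le two_ne_zero).1 (by nlinarith)
  have h0 := gaussStudentTLogRatio_zero_pos hσ hρ hσs
  obtain ⟨r, hr, hr0⟩ :=
    intermediate_value_Ici' (continuous_gaussStudentTLogRatio hρ hs).continuousOn
    (tendsto_gaussStudentTLogRatio_atTop hσ.ne' hρ hs hk) h0.le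
  exact ⟨r, lt_of_le_of_ne hr (by rintro rfl; exact h0.ne' hr0), hr0⟩

end LogRatio

theorem add_one_mul_sq_lt_mul_sq_mul_sqrt {σ ρ : ℝ} (hσ : σ ≠ 0) (hρ : 2 < ρ) :
    (ρ + 1) * σ ^ 2 < ρ * (σ * √(ρ / (ρ - 2))) ^ 2 := by
  have hρ2 : 0 < ρ - 2 := by linarith
  have hσ2 : 0 < σ ^ 2 := by positivity
  rw [mul_pow, sq_sqrt (by positivity), mul_left_comm, mul_div_assoc', mul_comm _ (σ ^ 2),
    mul_lt_mul_iff_right₀ hσ2, lt_div_iff₀ hρ2]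
  nlinarith

/-- There is a unique crossing radius `r > 0` with `g(μ+r) = h(μ+r)`; moreover the
Gaussian density exceeds the Student t density strictly inside radius `r` around the
mean and is strictly below it outside radius `r` (in the tails). Here
`s = σ√(ρ/(ρ−2))` is the paper's scale choice. -/
theorem gauss_studentT_unique_crossing (μ σ ρ : ℝ) (hσ : 0 < σ) (hρ : 2 < ρ) :
    ∃ r : ℝ, 0 < r ∧
      gaussDensity μ σ (μ + r) = studentTDensity μ ρ (σ * Real.sqrt (ρ / (ρ - 2))) (μ + r) ∧
      (∀ r' : ℝ, 0 < r' →
        gaussDensity μ σ (μ + r') = studentTDensity μ ρ (σ * Real.sqrt (ρ / (ρ - 2))) (μ + r') →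
        r' = r) ∧
      (∀ x : ℝ, |x - μ| < r →
        gaussDensity μ σ x > studentTDensity μ ρ (σ * Real.sqrt (ρ / (ρ - 2))) x) ∧
      (∀ x : ℝ, |x - μ| > r →
        gaussDensity μ σ x < studentTDensity μ ρ (σ * Real.sqrt (ρ / (ρ - 2))) x) := by
  set s := σ * √(ρ / (ρ - 2))
  have hρ0 : 0 < ρ := by linarith
  have hs : 0 < s := mul_pos hσ (sqrt_pos.2 (div_pos hρ0 (by linarith)))
  have hk := add_one_mul_sq_lt_mul_sq_mul_sqrt hσ.ne' hρ
  have hanti := strictAntiOn_gaussStudentTLogRatio hσ.ne' hρ0 hs hk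
  have hgh := gaussDensity_eq_studentTDensity_mul_exp hσ.ne' hρ0 hs μ
  have hh := studentTDensity_pos (μ := μ) hρ0 hs
  obtain ⟨r, hr, hr0⟩ := exists_pos_gaussStudentTLogRatio_eq_zero hσ hρ0 hs hk
  refine ⟨r, hr, ?_, fun r' hr' heq => ?_, fun x hx => ?_, fun x hx => ?_⟩
  · rw [hgh, add_sub_cancel_left, abs_of_pos hr, hr0, exp_zero, mul_one]
  · rw [hgh, add_sub_cancel_left, abs_of_pos hr', mul_eq_left₀ (hh _).ne', exp_eq_one_iff] at heq
    exact hanti.injOn hr'.le hr.le (heq.trans hr0.symm)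
  · rw [gt_iff_lt, hgh]
    exact lt_mul_of_one_lt_right (hh x)
      (one_lt_exp_iff.2 (hr0 ▸ hanti (abs_nonneg (x - μ)) hr.le hx))
  · rw [hgh]
    exact mul_lt_of_lt_one_right (hh x)
      (exp_lt_one_iff.2 (hr0 ▸ hanti hr.le (abs_nonneg (x - μ)) hx))
end
end

section
/- For every ρ > 2, the Gamma-function ratio satisfies the strict inequality Γ((ρ+1)/2)/Γ(ρ/2) < ρ/√(2(ρ−2)). -/
open Real

/-- For every `ρ > 2`, the Gamma-function ratio satisfies the strict inequality
`Γ((ρ+1)/2)/Γ(ρ/2) < ρ/√(2(ρ−2))`. -/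
theorem gamma_ratio_lt (ρ : ℝ) (hρ : 2 < ρ) :
    Real.Gamma ((ρ + 1) / 2) / Real.Gamma (ρ / 2) < ρ / Real.sqrt (2 * (ρ - 2)) := by
  have hx : (0:ℝ) < ρ / 2 := by linarith
  have hGx : 0 < Real.Gamma (ρ / 2) := Real.Gamma_pos_of_pos hx
  -- Wendel-style bound via log-convexity
  have h1 : Real.Gamma ((ρ + 1) / 2) ≤ Real.Gamma (ρ / 2) * Real.sqrt (ρ / 2) := by
    have key := Real.Gamma_mul_add_mul_le_rpow_Gamma_mul_rpow_Gamma (s := ρ / 2)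
      (t := ρ / 2 + 1) (a := 1/2) (b := 1/2) hx (by linarith) (by norm_num) (by norm_num)
      (by norm_num)
    have harg : (1/2 : ℝ) * (ρ / 2) + (1/2) * (ρ / 2 + 1) = (ρ + 1) / 2 := by ring
    rw [harg, Real.Gamma_add_one (ne_of_gt hx)] at key
    calc Real.Gamma ((ρ + 1) / 2)
        ≤ Real.Gamma (ρ / 2) ^ (1/2 : ℝ) * (ρ / 2 * Real.Gamma (ρ / 2)) ^ (1/2 : ℝ) := key
      _ = Real.Gamma (ρ / 2) * Real.sqrt (ρ / 2) := by
          rw [Real.mul_rpow (le_of_lt hx) (le_of_lt hGx), ← Real.sqrt_eq_rpow,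
            ← Real.sqrt_eq_rpow,
            show ∀ a b : ℝ, a * (b * a) = a * a * b from fun a b => by ring,
            Real.mul_self_sqrt (le_of_lt hGx)]
  have h2 : Real.sqrt (ρ / 2) < ρ / Real.sqrt (2 * (ρ - 2)) := by
    have hpos : (0:ℝ) < 2 * (ρ - 2) := by linarith
    rw [lt_div_iff₀ (Real.sqrt_pos.mpr hpos), ← Real.sqrt_mul (le_of_lt hx)]
    have : ρ / 2 * (2 * (ρ - 2)) = ρ * (ρ - 2) := by ring
    rw [this]
    calc Real.sqrt (ρ * (ρ - 2)) < Real.sqrt (ρ * ρ) := by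
          apply Real.sqrt_lt_sqrt (by nlinarith) (by nlinarith)
      _ = ρ := Real.sqrt_mul_self (by linarith)
  calc Real.Gamma ((ρ + 1) / 2) / Real.Gamma (ρ / 2)
      ≤ Real.sqrt (ρ / 2) := by
        rw [div_le_iff₀ hGx]; linarith [h1]
    _ < ρ / Real.sqrt (2 * (ρ - 2)) := h2
end
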